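/- arXiv:2203.11927 — 2 statements merged into one kernel-verified Lean document; each statement's English description precedes it below -/
import Mathlib

section
/- Suppose σ_1, …, σ_r satisfy property I with witnesses α_1, …, α_r ⊆ {1,…,N}. Then χ_c(S)(t) = t^n · Σ_{F ∈ T(S)} t^{−|F|} (1 − t^{−1})^{N−|F|} in ℤ[t,t⁻¹]. In particular, the simplicial chromatic polynomial χ_c(S) is entirely determined by n, N, and the face numbers (equivalently, the h-vector) of the auxiliary simplicial complex T(S). -/
open Finset LaurentPolynomial

noncomputable section

/-- The union `σ_I = ⋃_{i ∈ I} σ_i`. -/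
def unionOver {ι V : Type*} [DecidableEq V] (σ : ι → Finset V) (I : Finset ι) : Finset V :=
  I.sup σ

/-- The intersection graph `G_I` on the vertex set `I`. -/
def interGraph {ι V : Type*} [DecidableEq V] (σ : ι → Finset V) (I : Finset ι) :
    SimpleGraph {i // i ∈ I} where
  Adj i j := i ≠ j ∧ (σ i.1 ∩ σ j.1).Nonempty
  symm := by
    constructor
    intro i j h
    exact ⟨h.1.symm, by rw [Finset.inter_comm]; exact h.2⟩
  loopless := by constructor; intro i h; exact h.1 rfl

/-- `c(I)`, the number of connected components of `G_I`. -/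
def compCount {ι V : Type*} [DecidableEq V] (σ : ι → Finset V) (I : Finset ι) : ℕ :=
  Nat.card (interGraph σ I).ConnectedComponent

/-- Property I. -/
def PropertyI {ι V W : Type*} [DecidableEq V] [DecidableEq W]
    (σ : ι → Finset V) (α : ι → Finset W) : Prop :=
  (∀ i, (α i).card + 1 = (σ i).card) ∧
  ∀ I : Finset ι, I.Nonempty → ∀ p ∉ I,
    (unionOver σ I ∩ σ p = ∅ → unionOver α I ∩ α p = ∅) ∧
    ((unionOver σ I ∩ σ p).Nonempty →
      (unionOver α I ∩ α p).card + 1 = (unionOver σ I ∩ σ p).card)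

/-- The simplicial chromatic polynomial. -/
def simpChrom {ι : Type*} [Fintype ι] [DecidableEq ι] {n : ℕ} (σ : ι → Finset (Fin n)) :
    LaurentPolynomial ℤ :=
  T (n : ℤ) +
  ∑ I ∈ (univ : Finset ι).powerset.filter (fun I => I.Nonempty),
    (-1) ^ I.card *
      T ((n : ℤ) - ((unionOver σ I).card : ℤ) + (compCount σ I : ℤ))

/-- Faces of the complex whose minimal nonfaces are the `α i`. -/
def facesOf {ι : Type*} [Fintype ι] {N : ℕ} (α : ι → Finset (Fin N)) :
    Finset (Finset (Fin N)) :=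
  (univ : Finset (Finset (Fin N))).filter (fun F => ∀ i, ¬ α i ⊆ F)

/-- Coefficient of `t^k` in a Laurent polynomial. -/
def lcoeff (p : LaurentPolynomial ℤ) (k : ℤ) : ℤ := p.coeff k

end

/-!
Under property I, `|σ_I| - |α_I|` is the number `c(I)` of components of `G_I`. Indeed, the
`α`-unions of distinct components are disjoint, and a component can be assembled one set at a
time, each new `σ_p` meeting the union built so far, which by property I leaves `|σ| - |α|` at
its initial value `1`. Hence `χ_c(S) = t^n ∑_I (-1)^|I| t^(-|α_I|)`, and inclusion–exclusion over
the minimal nonfaces `α_i`, with `∑_{F ⊇ A} t^(-|F|) (1 - t^(-1))^(N - |F|) = t^(-|A|)`, turns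
this into the sum over the faces of `T(S)`.
-/

section UnionOver

variable {ι V W : Type*} [DecidableEq V] [DecidableEq W] {σ : ι → Finset V} {α : ι → Finset W}

theorem mem_unionOver {I : Finset ι} {x : V} : x ∈ unionOver σ I ↔ ∃ i ∈ I, x ∈ σ i :=
  mem_sup

theorem subset_unionOver {I : Finset ι} {i : ι} (hi : i ∈ I) : σ i ⊆ unionOver σ I :=
  le_sup (f := σ) hi

theorem unionOver_insert [DecidableEq ι] (p : ι) (I : Finset ι) :
    unionOver σ (insert p I) = σ p ∪ unionOver σ I :=
  sup_insert

theorem card_unionOver_biUnion [DecidableEq ι] {κ : Type*} {s : Finset κ} {t : κ → Finset ι}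
    (h : (s : Set κ).PairwiseDisjoint fun k => unionOver σ (t k)) :
    #(unionOver σ (s.biUnion t)) = ∑ k ∈ s, #(unionOver σ (t k)) := by
  rw [unionOver, sup_biUnion, sup_eq_biUnion]
  exact card_biUnion h

theorem PropertyI.nonempty (h : PropertyI σ α) (i : ι) : (σ i).Nonempty :=
  card_pos.1 (by have := h.1 i; omega)

theorem PropertyI.disjoint_unionOver (h : PropertyI σ α) {A B : Finset ι} (hA : A.Nonempty)
    (hAB : Disjoint (unionOver σ A) (unionOver σ B)) :
    Disjoint (unionOver α A) (unionOver α B) := by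
  rw [disjoint_left]
  intro x hxA hxB
  obtain ⟨p, hpB, hxp⟩ := mem_unionOver.1 hxB
  have hσp : Disjoint (unionOver σ A) (σ p) := hAB.mono_right (subset_unionOver hpB)
  have hpA : p ∉ A := fun hpA => (h.nonempty p).ne_empty <|
    (disjoint_self_iff_empty _).1 (hσp.mono_left (subset_unionOver hpA))
  have hαp := (h.2 A hA p hpA).1 (disjoint_iff_inter_eq_empty.1 hσp)
  exact disjoint_left.1 (disjoint_iff_inter_eq_empty.2 hαp) hxA hxp

theorem PropertyI.card_unionOver_insert [DecidableEq ι] (h : PropertyI σ α) {A : Finset ι}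
    (hA : A.Nonempty) {p : ι} (hp : p ∉ A) (hAp : (unionOver σ A ∩ σ p).Nonempty)
    (hcard : #(unionOver α A) + 1 = #(unionOver σ A)) :
    #(unionOver α (insert p A)) + 1 = #(unionOver σ (insert p A)) := by
  have hαp := (h.2 A hA p hp).2 hAp
  have := card_union_add_card_inter (unionOver α A) (α p)
  have := card_union_add_card_inter (unionOver σ A) (σ p)
  have := h.1 p
  rw [unionOver_insert, unionOver_insert, union_comm (σ p), union_comm (α p)]
  omega

theorem PropertyI.card_unionOver_add_one_of_subset [DecidableEq ι] (h : PropertyI σ α)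
    {S A : Finset ι}
    (hS : ∀ A ⊆ S, A.Nonempty → A ≠ S → ∃ p ∈ S \ A, (unionOver σ A ∩ σ p).Nonempty)
    (hAS : A ⊆ S) (hA : A.Nonempty) (hcard : #(unionOver α A) + 1 = #(unionOver σ A)) :
    #(unionOver α S) + 1 = #(unionOver σ S) := by
  by_cases hAS' : A = S
  · exact hAS' ▸ hcard
  obtain ⟨p, hp, hAp⟩ := hS A hAS hA hAS'
  rw [mem_sdiff] at hp
  exact h.card_unionOver_add_one_of_subset hS (insert_subset hp.1 hAS) (insert_nonempty p A)
    (h.card_unionOver_insert hA hp.2 hAp hcard)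
termination_by #(S \ A)
decreasing_by
  rw [sdiff_insert]
  exact card_erase_lt_of_mem hp

end UnionOver

section Components

variable {ι V : Type*} [DecidableEq V] {σ : ι → Finset V} {I : Finset ι}

variable (σ) in
open Classical in
noncomputable def componentFinset (K : (interGraph σ I).ConnectedComponent) : Finset ι :=
  ({v | (interGraph σ I).connectedComponentMk v = K} : Finset I).map
    (Function.Embedding.subtype _)

theorem mem_componentFinset {K : (interGraph σ I).ConnectedComponent} {j : ι} :
    j ∈ componentFinset σ K ↔
      ∃ hj : j ∈ I, (interGraph σ I).connectedComponentMk ⟨j, hj⟩ = K := by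
  simp [componentFinset]

theorem componentFinset_nonempty (K : (interGraph σ I).ConnectedComponent) :
    (componentFinset σ K).Nonempty := by
  obtain ⟨⟨j, hj⟩, rfl⟩ := K.exists_rep
  exact ⟨j, mem_componentFinset.2 ⟨hj, rfl⟩⟩

theorem biUnion_componentFinset [Fintype (interGraph σ I).ConnectedComponent] [DecidableEq ι] :
    univ.biUnion (componentFinset σ (I := I)) = I := by
  ext j
  simp only [mem_biUnion, mem_univ, true_and, mem_componentFinset]
  exact ⟨fun ⟨_, hj, _⟩ => hj, fun hj => ⟨_, hj, rfl⟩⟩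

theorem disjoint_unionOver_componentFinset {K L : (interGraph σ I).ConnectedComponent}
    (hKL : K ≠ L) :
    Disjoint (unionOver σ (componentFinset σ K)) (unionOver σ (componentFinset σ L)) := by
  rw [disjoint_left]
  intro x hxK hxL
  obtain ⟨i, hiK, hxi⟩ := mem_unionOver.1 hxK
  obtain ⟨j, hjL, hxj⟩ := mem_unionOver.1 hxL
  obtain ⟨hi, rfl⟩ := mem_componentFinset.1 hiK
  obtain ⟨hj, rfl⟩ := mem_componentFinset.1 hjL
  refine hKL (SimpleGraph.ConnectedComponent.sound ?_)
  by_cases hij : i = j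
  · subst hij; rfl
  · exact SimpleGraph.Adj.reachable
      ⟨fun h => hij (congrArg Subtype.val h), x, mem_inter.2 ⟨hxi, hxj⟩⟩

theorem exists_mem_componentFinset_inter_nonempty [DecidableEq ι]
    {K : (interGraph σ I).ConnectedComponent} {A : Finset ι} (hAK : A ⊆ componentFinset σ K)
    (hA : A.Nonempty) (hAK' : A ≠ componentFinset σ K) :
    ∃ p ∈ componentFinset σ K \ A, (unionOver σ A ∩ σ p).Nonempty := by
  obtain ⟨a, haA⟩ := hA
  obtain ⟨q, hqK, hqA⟩ := exists_of_ssubset (ssubset_of_subset_of_ne hAK hAK')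
  obtain ⟨ha, haK⟩ := mem_componentFinset.1 (hAK haA)
  obtain ⟨hq, hqK⟩ := mem_componentFinset.1 hqK
  obtain ⟨w⟩ := SimpleGraph.ConnectedComponent.exact (haK.trans hqK.symm)
  obtain ⟨d, -, hd, hd'⟩ := w.exists_boundary_dart {v | v.1 ∈ A} haA hqA
  have hdK : (interGraph σ I).connectedComponentMk d.snd = K :=
    (SimpleGraph.ConnectedComponent.connectedComponentMk_eq_of_adj d.adj).symm.trans
      (mem_componentFinset.1 (hAK hd)).2
  refine ⟨d.snd.1, mem_sdiff.2 ⟨mem_componentFinset.2 ⟨d.snd.2, hdK⟩, hd'⟩, ?_⟩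
  obtain ⟨y, hy⟩ := d.adj.2
  rw [mem_inter] at hy
  exact ⟨y, mem_inter.2 ⟨subset_unionOver hd hy.1, hy.2⟩⟩

end Components

theorem PropertyI.card_unionOver_add_compCount {ι V W : Type*} [DecidableEq V] [DecidableEq W]
    {σ : ι → Finset V} {α : ι → Finset W} (h : PropertyI σ α) (I : Finset ι) :
    #(unionOver α I) + compCount σ I = #(unionOver σ I) := by
  classical
  have hσ : #(unionOver σ I) =
      ∑ K : (interGraph σ I).ConnectedComponent, #(unionOver σ (componentFinset σ K)) := by
    rw [← card_unionOver_biUnion fun K _ L _ hKL => disjoint_unionOver_componentFinset hKL,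
      biUnion_componentFinset]
  have hα : #(unionOver α I) =
      ∑ K : (interGraph σ I).ConnectedComponent, #(unionOver α (componentFinset σ K)) := by
    rw [← card_unionOver_biUnion fun K _ L _ hKL =>
        h.disjoint_unionOver (componentFinset_nonempty K) (disjoint_unionOver_componentFinset hKL),
      biUnion_componentFinset]
  have hK (K : (interGraph σ I).ConnectedComponent) :
      #(unionOver α (componentFinset σ K)) + 1 = #(unionOver σ (componentFinset σ K)) := by
    obtain ⟨i, hi⟩ := componentFinset_nonempty K
    refine h.card_unionOver_add_one_of_subset (fun A => exists_mem_componentFinset_inter_nonempty)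
      (singleton_subset_iff.2 hi) (singleton_nonempty i) ?_
    simpa only [unionOver, sup_singleton] using h.1 i
  rw [hσ, hα, compCount, Nat.card_eq_fintype_card, Fintype.card, card_eq_sum_ones,
    ← sum_add_distrib]
  exact sum_congr rfl fun K _ => hK K

theorem sum_superset_pow_mul_pow {α R : Type*} [Fintype α] [DecidableEq α] [CommSemiring R]
    (A : Finset α) (x y : R) :
    ∑ F with A ⊆ F, x ^ #F * y ^ (Fintype.card α - #F) =
      x ^ #A * (x + y) ^ (Fintype.card α - #A) := by
  rw [← card_compl, ← sum_pow_mul_eq_add_pow, mul_sum]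
  refine sum_nbij' (· \ A) (A ∪ ·) (fun F _ => by simp) (fun G _ => by simp) ?_ ?_ ?_
  · intro F hF
    exact union_sdiff_of_subset (mem_filter.1 hF).2
  · intro G hG
    exact union_sdiff_cancel_left (subset_compl_iff_disjoint_left.1 (mem_powerset.1 hG))
  · intro F hF
    rw [← card_sdiff_add_card_eq_card (mem_filter.1 hF).2, card_compl, add_comm, pow_add,
      Nat.sub_add_eq, mul_assoc]

theorem sum_superset_T {N : ℕ} (A : Finset (Fin N)) :
    ∑ F with A ⊆ F, T (-(#F : ℤ)) * (1 - T (-1)) ^ (N - #F) =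
      (T (-(#A : ℤ)) : ℤ[T;T⁻¹]) := by
  have hT (k : ℕ) : (T (-(k : ℤ)) : ℤ[T;T⁻¹]) = T (-1) ^ k := by
    rw [T_pow, mul_neg_one]
  have := sum_superset_pow_mul_pow A (T (-1) : ℤ[T;T⁻¹]) (1 - T (-1))
  rw [add_sub_cancel, one_pow, mul_one, Fintype.card_fin] at this
  simpa only [hT] using this

theorem sum_facesOf {ι G : Type*} [Fintype ι] [AddCommGroup G] {N : ℕ}
    (α : ι → Finset (Fin N)) (f : Finset (Fin N) → G) :
    ∑ F ∈ facesOf α, f F = ∑ I : Finset ι, (-1) ^ #I • ∑ F with unionOver α I ⊆ F, f F := by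
  classical
  convert inclusion_exclusion_sum_inf_compl univ (fun i => ({F | α i ⊆ F} : Finset _)) f using 1
  · congr 1
    ext F
    simp [facesOf, mem_inf]
  · refine sum_congr rfl fun I _ => ?_
    congr 2
    ext F
    simp [unionOver, mem_inf]

theorem simpChrom_eq_sum {ι : Type*} [Fintype ι] [DecidableEq ι] {n : ℕ}
    (σ : ι → Finset (Fin n)) :
    simpChrom σ =
      ∑ I : Finset ι, (-1) ^ #I * T ((n : ℤ) - #(unionOver σ I) + compCount σ I) := by
  rw [simpChrom, ← add_sum_erase univ _ (mem_univ ∅)]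
  congr 1
  · simp [unionOver, compCount]
  · refine sum_congr ?_ fun _ _ => rfl
    ext I
    simp [nonempty_iff_ne_empty]

/-- under property I,
`χ_c(S)(t) = t^n · Σ_{F ∈ T(S)} t^{−|F|} (1 − t^{−1})^{N−|F|}`. -/
theorem stmt_3 {n r N : ℕ}
    (σ : Fin r → Finset (Fin n)) (α : Fin r → Finset (Fin N))
    (h : PropertyI σ α) :
    simpChrom σ =
      T (n : ℤ) *
        ∑ F ∈ facesOf α,
          T (-(F.card : ℤ)) * (1 - T (-1)) ^ (N - F.card) := by
  simp only [simpChrom_eq_sum, sum_facesOf, sum_superset_T, mul_sum]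
  refine sum_congr rfl fun I _ => ?_
  have := h.card_unionOver_add_compCount I
  rw [zsmul_eq_mul, mul_left_comm, ← T_add]
  push_cast
  congr 2
  omega
end

section
/- If σ_i ∩ σ_j ≠ ∅ for all 1 ≤ i, j ≤ r, then c(I) = 1 for every nonempty I ⊆ {1,…,r}, and consequently χ_c(S)(t) − t^n = t^{n+1} (K(t^{−1}) − 1) in ℤ[t,t⁻¹], where K(x) = Σ_{I⊆{1,…,r}} (−1)^{|I|} x^{|σ_I|}. -/
open Finset LaurentPolynomial

/-! When the `σ_i` pairwise intersect, every intersection graph `G_I` is complete, so `c(I) = 1`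
for `I ≠ ∅`. Each term of `χ_c(S)` is then `(-1)^{|I|} t^{n+1} t^{-|σ_I|}`, and the missing `I = ∅`
term of `K(t⁻¹)` is the `1` that is subtracted. -/

theorem SimpleGraph.Connected.card_connectedComponent {V : Type*} {G : SimpleGraph V}
    (hG : G.Connected) : Nat.card G.ConnectedComponent = 1 :=
  Nat.card_eq_one_iff_unique.mpr
    ⟨hG.preconnected.subsingleton_connectedComponent, hG.nonempty.map G.connectedComponentMk⟩

theorem Finset.sum_powerset_eq_add_sum_filter_nonempty {α β : Type*} [DecidableEq α]
    [AddCommMonoid β] (s : Finset α) (f : Finset α → β) :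
    ∑ t ∈ s.powerset, f t = f ∅ + ∑ t ∈ s.powerset.filter (·.Nonempty), f t := by
  simp_rw [nonempty_iff_ne_empty, filter_ne', add_sum_erase _ _ (empty_mem_powerset s)]

section IntersectionGraph

variable {ι V : Type*} [DecidableEq V] {σ : ι → Finset V} {I : Finset ι}

@[simp]
theorem unionOver_empty (σ : ι → Finset V) : unionOver σ ∅ = ∅ :=
  Finset.sup_empty

theorem interGraph_eq_top (h : (I : Set ι).Pairwise fun i j => (σ i ∩ σ j).Nonempty) :
    interGraph σ I = ⊤ := by
  ext i j
  exact ⟨fun hij => hij.1, fun hij => ⟨hij, h i.2 j.2 (Subtype.coe_ne_coe.mpr hij)⟩⟩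

theorem compCount_eq_one (hI : I.Nonempty)
    (h : (I : Set ι).Pairwise fun i j => (σ i ∩ σ j).Nonempty) : compCount σ I = 1 := by
  have := hI.to_subtype
  rw [compCount, interGraph_eq_top h]
  exact SimpleGraph.connected_top.card_connectedComponent

end IntersectionGraph

/-- if `σ_i ∩ σ_j ≠ ∅` for all `i, j`, then `c(I) = 1` for every nonempty `I`,
and `χ_c(S)(t) − t^n = t^{n+1} (K(t^{−1}) − 1)` with `K(x) = Σ_{I⊆[r]} (−1)^{|I|} x^{|σ_I|}`. -/
theorem stmt_6 {n r : ℕ} (σ : Fin r → Finset (Fin n))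
    (h : ∀ i j, (σ i ∩ σ j).Nonempty) :
    (∀ I : Finset (Fin r), I.Nonempty → compCount σ I = 1) ∧
    simpChrom σ - T (n : ℤ) =
      T ((n : ℤ) + 1) *
        ((∑ I ∈ (univ : Finset (Fin r)).powerset,
            (-1) ^ I.card * T (-((unionOver σ I).card : ℤ))) - 1) := by
  have hc : ∀ I : Finset (Fin r), I.Nonempty → compCount σ I = 1 :=
    fun I hI => compCount_eq_one hI fun i _ j _ _ => h i j
  refine ⟨hc, ?_⟩
  simp only [sum_powerset_eq_add_sum_filter_nonempty, unionOver_empty, card_empty, Nat.cast_zero,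
    neg_zero, T_zero, pow_zero, one_mul, add_sub_cancel_left, mul_sum, simpChrom]
  refine sum_congr rfl fun I hI => ?_
  rw [hc I (mem_filter.mp hI).2, mul_left_comm, ← T_add]
  congr 2
  push_cast
  ring
end
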